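/- arXiv:1507.01917 — 3 statements merged into one kernel-verified Lean document; each statement's English description precedes it below -/
import Mathlib

section
/- Let F be a field of characteristic 2, and let Q be a finite group whose Sylow 2-subgroup is isomorphic to the generalized quaternion group of order 2^{m+1} for some m ≥ 2 (i.e., to QuaternionGroup (2^{m-1})). Then for every finite-dimensional F-linear representation M of Q, dim_F H^2(Q, M) ≤ 3 · dim_F M. -/
/-!
Restriction to a subgroup `S` whose index is invertible in `k` is injective on `Hⁿ`: the unit
`M ⟶ Coind_S^G (Res_S M)` composed with the trace `Coind_S^G (Res_S M) ⟶ M` is multiplication by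
`[G : S]`, and Shapiro's lemma identifies `Hⁿ(G, Coind_S^G (Res_S M))` with `Hⁿ(S, M)`. In
characteristic `2` this applies to a Sylow `2`-subgroup, so it suffices to bound `H²` of the
generalized quaternion group.

For a group `G = ⟨X | R⟩`, a `2`-cocycle `f` defines an extension `E_f` of `G` by `A`. Sending
`f` to the values in `E_f` of the relators, evaluated on the lifts `(0, x)` of the generators, is
linear in `f`; if all of them vanish, the lifts define a splitting `G →* E_f`, so `f` is a
coboundary. Hence `H²(G, A)` is a quotient of a subspace of `A ^ R`, and
`dim H²(G, A) ≤ |R| · dim A`. The quaternion group `Q₄ₙ` has a presentation with three relators.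
-/

open CategoryTheory

universe u

namespace Rep

variable {k G : Type u} [CommRing k] [Group G] {S : Subgroup G} [S.FiniteIndex]

attribute [local instance] Subgroup.fintypeQuotientOfFiniteIndex in
theorem resCoindAdjunction_unit_comp_coindResAdjunction_counit
    [DecidableRel (QuotientGroup.rightRel S)] (M : Rep k G) :
    (resCoindAdjunction k S.subtype).unit.app M ≫ (coindResAdjunction k S).counit.app M =
      S.index • 𝟙 M := by
  ext m
  simp only [coindResAdjunction_counit_app, hom_comp]
  rw [indResAdjunction, Adjunction.mkOfHomEquiv_counit_app]
  change ((indResHomEquiv S.subtype _ M).symm (𝟙 _)).hom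
    (coindToInd _ (((resCoindAdjunction k S.subtype).unit.app M).hom m)) = _
  rw [coindToInd_apply, map_sum, Finset.sum_congr rfl (g := fun _ => m), Finset.sum_const,
    Finset.card_univ, QuotientGroup.card_quotient_rightRel, ← Nat.card_eq_fintype_card,
    Subgroup.index]
  · rfl
  rintro ⟨g⟩ -
  change ((indResHomEquiv S.subtype _ M).symm (𝟙 _)).hom
    (Representation.IndV.mk _ _ g (M.ρ g m)) = m
  simp [indResHomEquiv]

end Rep

namespace groupCohomology

section Restriction

variable {k G : Type u} [CommRing k] [Group G] {S : Subgroup G} [S.FiniteIndex]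

theorem map_resCoindAdjunction_unit_injective (hS : IsUnit (S.index : k)) (M : Rep k G)
    (n : ℕ) :
    Function.Injective
      (map (MonoidHom.id G) ((Rep.resCoindAdjunction k S.subtype).unit.app M) n).hom := by
  classical
  have hsection : (Rep.resCoindAdjunction k S.subtype).unit.app M ≫
      (((hS.unit⁻¹ : kˣ) : k) • (Rep.coindResAdjunction k S).counit.app M) = 𝟙 M := by
    rw [Linear.comp_smul, Rep.resCoindAdjunction_unit_comp_coindResAdjunction_counit,
      ← Nat.cast_smul_eq_nsmul k, smul_smul, IsUnit.val_inv_mul, one_smul]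
  have hsplit : (functor k G n).map ((Rep.resCoindAdjunction k S.subtype).unit.app M) ≫
      (functor k G n).map (((hS.unit⁻¹ : kˣ) : k) • (Rep.coindResAdjunction k S).counit.app M) =
        𝟙 _ := by
    rw [← Functor.map_comp, hsection]
    exact (functor k G n).map_id M
  have : Mono ((functor k G n).map ((Rep.resCoindAdjunction k S.subtype).unit.app M)) :=
    mono_of_mono_fac hsplit
  exact (ModuleCat.mono_iff_injective _).1 this

end Restriction

theorem finrank_le_finrank_res_of_isUnit_index {k G : Type u} [Field k] [Group G]
    {S : Subgroup G} [S.FiniteIndex] (hS : IsUnit (S.index : k)) (M : Rep k G) (n : ℕ)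
    [FiniteDimensional k (groupCohomology (Rep.res S.subtype M) n)] :
    Module.finrank k (groupCohomology M n) ≤
      Module.finrank k (groupCohomology (Rep.res S.subtype M) n) :=
  LinearMap.finrank_le_finrank_of_injective
    (f := (coindIso (Rep.res S.subtype M) n).toLinearEquiv.toLinearMap ∘ₗ
      (map (MonoidHom.id G) ((Rep.resCoindAdjunction k S.subtype).unit.app M) n).hom)
    ((coindIso (Rep.res S.subtype M) n).toLinearEquiv.injective.comp
      (map_resCoindAdjunction_unit_injective hS M n))

section Extension

variable {k G : Type u} [CommRing k] [Group G] {A : Rep k G}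

/-- The extension of `G` by `A` defined by `f`. As `f` need not be normalized, its identity is
`(-f (1, 1), 1)`. -/
@[ext]
structure CocycleExtension (_f : cocycles₂ A) where
  fst : A
  snd : G

namespace CocycleExtension

variable (f : cocycles₂ A)

instance : Mul (CocycleExtension f) :=
  ⟨fun x y => ⟨x.fst + A.ρ x.snd y.fst + f (x.snd, y.snd), x.snd * y.snd⟩⟩

instance : One (CocycleExtension f) := ⟨⟨-f (1, 1), 1⟩⟩

instance : Inv (CocycleExtension f) :=
  ⟨fun x => ⟨-A.ρ x.snd⁻¹ x.fst - f (x.snd⁻¹, x.snd) - f (1, 1), x.snd⁻¹⟩⟩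

variable {f}

lemma fst_mul (x y : CocycleExtension f) :
    (x * y).fst = x.fst + A.ρ x.snd y.fst + f (x.snd, y.snd) := rfl

lemma snd_mul (x y : CocycleExtension f) : (x * y).snd = x.snd * y.snd := rfl

lemma fst_one : (1 : CocycleExtension f).fst = -f (1, 1) := rfl

lemma snd_one : (1 : CocycleExtension f).snd = 1 := rfl

lemma fst_inv (x : CocycleExtension f) :
    x⁻¹.fst = -A.ρ x.snd⁻¹ x.fst - f (x.snd⁻¹, x.snd) - f (1, 1) := rfl

lemma snd_inv (x : CocycleExtension f) : x⁻¹.snd = x.snd⁻¹ := rfl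

instance : Group (CocycleExtension f) := Group.ofLeftAxioms
  (fun x y z => by
    refine CocycleExtension.ext ?_ (mul_assoc x.snd y.snd z.snd)
    simp only [fst_mul, snd_mul, map_add, map_mul, Module.End.mul_apply]
    linear_combination (norm := module) (mem_cocycles₂_iff f.1).1 f.2 x.snd y.snd z.snd)
  (fun x => by
    refine CocycleExtension.ext ?_ (one_mul x.snd)
    simp [fst_mul, fst_one, snd_one, cocycles₂_map_one_fst])
  (fun x => by
    refine CocycleExtension.ext ?_ (inv_mul_cancel x.snd)
    simp only [fst_mul, fst_one, fst_inv, snd_inv]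
    abel)

variable (f) in
def sndHom : CocycleExtension f →* G where
  toFun := snd
  map_one' := rfl
  map_mul' _ _ := rfl

end CocycleExtension

theorem mem_coboundaries₂_of_splitting (f : cocycles₂ A) (σ : G →* CocycleExtension f)
    (hσ : ∀ g, (σ g).snd = g) : ⇑f ∈ coboundaries₂ A := by
  refine ⟨fun g => -(σ g).fst, funext fun ⟨g, h⟩ => ?_⟩
  have hmul := congrArg CocycleExtension.fst (σ.map_mul g h)
  rw [CocycleExtension.fst_mul, hσ, hσ] at hmul
  simp only [d₁₂_hom_apply, map_neg, hmul]
  abel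

end Extension

section Presentation

variable {k G : Type u} [CommRing k] [Group G] {A : Rep k G}
  {α : Type*} {rels : Set (FreeGroup α)} (e : G ≃* PresentedGroup rels)

def liftGenerators (f : cocycles₂ A) : FreeGroup α →* CocycleExtension f :=
  FreeGroup.lift fun x => ⟨0, e.symm (.of x)⟩

lemma snd_liftGenerators (f : cocycles₂ A) (w : FreeGroup α) :
    (liftGenerators e f w).snd = e.symm (PresentedGroup.mk rels w) := by
  change (CocycleExtension.sndHom f).comp (liftGenerators e f) w =
    e.symm.toMonoidHom.comp (PresentedGroup.mk rels) w
  congr 1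
  ext x
  simp [liftGenerators, CocycleExtension.sndHom]
  rfl

lemma fst_liftGenerators_linear_combination (a b : k) (f f' : cocycles₂ A) (w : FreeGroup α) :
    (liftGenerators e (a • f + b • f') w).fst =
      a • (liftGenerators e f w).fst + b • (liftGenerators e f' w).fst := by
  have hcoe (p : G × G) : (a • f + b • f') p = a • f p + b • f' p := rfl
  induction w using FreeGroup.induction_on with
  | C1 =>
    simp only [map_one, CocycleExtension.fst_one, hcoe]
    module
  | of x =>
    simp [liftGenerators]
  | inv_of x ih =>
    simp only [map_inv, CocycleExtension.fst_inv, snd_liftGenerators, ih, hcoe, map_add,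
      map_smul]
    module
  | mul u v hu hv =>
    simp only [map_mul, CocycleExtension.fst_mul, snd_liftGenerators, hu, hv, hcoe, map_add,
      map_smul]
    module

/-- The relator `r` lifts to `1 = (-f (1, 1), 1)` in the extension iff its value here is `0`. -/
def relatorValues : cocycles₂ A →ₗ[k] (rels → A) where
  toFun f r := (liftGenerators e f r).fst + f (1, 1)
  map_add' f f' := by
    funext r
    have h := fst_liftGenerators_linear_combination e 1 1 f f' r
    rw [one_smul, one_smul] at h
    simp only [Pi.add_apply, h, one_smul]
    change _ + (f (1, 1) + f' (1, 1)) = _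
    abel
  map_smul' a f := by
    funext r
    have h := fst_liftGenerators_linear_combination e a 0 f f r
    rw [zero_smul, add_zero] at h
    simp only [Pi.smul_apply, RingHom.id_apply, h, zero_smul, add_zero, smul_add]
    rfl

theorem mem_coboundaries₂_of_relatorValues_eq_zero (f : cocycles₂ A)
    (hf : relatorValues e f = 0) : ⇑f ∈ coboundaries₂ A := by
  have hrels : ∀ r ∈ rels, liftGenerators e f r = 1 := fun r hr => by
    refine CocycleExtension.ext ?_ ?_
    · rw [CocycleExtension.fst_one, ← add_eq_zero_iff_eq_neg]
      exact congrFun hf ⟨r, hr⟩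
    · rw [snd_liftGenerators, PresentedGroup.one_of_mem hr, map_one]
      rfl
  have hsnd : (CocycleExtension.sndHom f).comp (PresentedGroup.toGroup hrels) =
      e.symm.toMonoidHom :=
    PresentedGroup.ext fun x => congrArg CocycleExtension.snd (PresentedGroup.toGroup.of hrels)
  exact mem_coboundaries₂_of_splitting f ((PresentedGroup.toGroup hrels).comp e.toMonoidHom)
    fun g => (DFunLike.congr_fun hsnd (e g)).trans (e.symm_apply_apply g)

theorem exists_surjective_range_relatorValues (A : Rep k G) :
    ∃ ψ : LinearMap.range (relatorValues (A := A) e) →ₗ[k] H2 A, Function.Surjective ψ := by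
  have hker : LinearMap.ker (relatorValues (A := A) e) ≤ LinearMap.ker (H2π A).hom :=
    fun f hf => (H2π_eq_zero_iff f).2 (mem_coboundaries₂_of_relatorValues_eq_zero e f hf)
  refine ⟨(LinearMap.ker _).liftQ _ hker ∘ₗ (relatorValues e).quotKerEquivRange.symm.toLinearMap,
    ?_⟩
  rw [LinearMap.coe_comp, LinearEquiv.coe_coe]
  refine Function.Surjective.comp ?_ (LinearEquiv.surjective _)
  rw [← LinearMap.range_eq_top, Submodule.range_liftQ, LinearMap.range_eq_top]
  exact (ModuleCat.epi_iff_surjective _).1 inferInstance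

end Presentation

section FinitePresentation

variable {k G : Type u} [Field k] [Group G] {α : Type*} {rels : Finset (FreeGroup α)}

theorem finiteDimensional_H2_of_presentation (e : G ≃* PresentedGroup (rels : Set (FreeGroup α)))
    (A : Rep k G) [FiniteDimensional k A] : FiniteDimensional k (H2 A) :=
  have ⟨_, hψ⟩ := exists_surjective_range_relatorValues e A
  Module.Finite.of_surjective _ hψ

theorem finrank_H2_le_of_presentation (e : G ≃* PresentedGroup (rels : Set (FreeGroup α)))
    (A : Rep k G) [FiniteDimensional k A] :
    Module.finrank k (H2 A) ≤ rels.card * Module.finrank k A := by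
  obtain ⟨ψ, hψ⟩ := exists_surjective_range_relatorValues e A
  calc Module.finrank k (H2 A)
      ≤ Module.finrank k (LinearMap.range (relatorValues (A := A) e)) :=
        LinearMap.finrank_le_finrank_of_surjective hψ
    _ ≤ Module.finrank k (↥(rels : Set (FreeGroup α)) → A) := Submodule.finrank_le _
    _ = rels.card * Module.finrank k A := by simp [Module.finrank_pi_fintype]

end FinitePresentation

end groupCohomology

theorem zpow_eq_zpow_of_intCast_eq {H : Type*} [Group H] {A : H} {N : ℕ} (hA : A ^ N = 1)
    {m m' : ℤ} (h : (m : ZMod N) = m') : A ^ m = A ^ m' :=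
  zpow_eq_zpow_iff_modEq.2 <| ((ZMod.intCast_eq_intCast_iff _ _ _).1 h).of_dvd
    (Int.natCast_dvd_natCast.2 (orderOf_dvd_of_pow_eq_one hA))

namespace QuaternionGroup

variable {n : ℕ} [NeZero n] {H : Type*} [Group H]

theorem exists_monoidHom_of_relations {A X : H} (hA : A ^ (2 * n) = 1) (hX : X * X = A ^ n)
    (hAX : X⁻¹ * A * X = A⁻¹) :
    ∃ φ : QuaternionGroup n →* H, φ (a 1) = A ∧ φ (xa 0) = X := by
  have hconj (m : ℤ) : A ^ m * X = X * A ^ (-m) := by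
    have := conj_zpow (a := X⁻¹) (b := A) (i := m)
    rw [inv_inv, hAX, inv_zpow, ← zpow_neg] at this
    rw [this]
    group
  have hpow (i : ZMod (2 * n)) (m : ℤ) (h : (m : ZMod (2 * n)) = i) :
      A ^ (i.val : ℤ) = A ^ m :=
    zpow_eq_zpow_of_intCast_eq (by exact_mod_cast hA) (by simp [h])
  refine ⟨MonoidHom.mk' (fun g => match g with
    | a i => A ^ (i.val : ℤ)
    | xa i => X * A ^ (i.val : ℤ)) ?_, ?_, ?_⟩
  · rintro (i | i) (j | j)
    · show A ^ ((i + j).val : ℤ) = A ^ (i.val : ℤ) * A ^ (j.val : ℤ)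
      rw [← zpow_add, hpow (i + j) (i.val + j.val) (by simp)]
    · show X * A ^ ((j - i).val : ℤ) = A ^ (i.val : ℤ) * (X * A ^ (j.val : ℤ))
      rw [← mul_assoc, hconj, mul_assoc, ← zpow_add, hpow (j - i) (-i.val + j.val) (by simp; ring)]
    · show X * A ^ ((i + j).val : ℤ) = X * A ^ (i.val : ℤ) * A ^ (j.val : ℤ)
      rw [mul_assoc, ← zpow_add, hpow (i + j) (i.val + j.val) (by simp)]
    · show A ^ ((n + j - i).val : ℤ) = X * A ^ (i.val : ℤ) * (X * A ^ (j.val : ℤ))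
      rw [hpow (n + j - i) (n + -i.val + j.val) (by simp; ring), zpow_add, zpow_add, zpow_natCast,
        ← hX, mul_assoc X X, ← hconj]
      group
  · show A ^ ((1 : ZMod (2 * n)).val : ℤ) = A
    rw [hpow 1 1 (by simp), zpow_one]
  · show X * A ^ ((0 : ZMod (2 * n)).val : ℤ) = X
    simp

theorem hom_ext {φ ψ : QuaternionGroup n →* H} (ha : φ (a 1) = ψ (a 1))
    (hxa : φ (xa 0) = ψ (xa 0)) : φ = ψ := by
  have hpow (i : ZMod (2 * n)) : (a 1 : QuaternionGroup n) ^ i.val = a i := by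
    rw [a_one_pow, ZMod.natCast_zmod_val]
  ext (i | i)
  · rw [← hpow, map_pow, map_pow, ha]
  · rw [← zero_add i, ← xa_mul_a, ← hpow, map_mul, map_mul, map_pow, map_pow, ha, hxa]

variable (n)

/-- The letters `0` and `1` stand for `a 1` and `xa 0`. -/
def relators : Finset (FreeGroup (Fin 2)) :=
  {.of 0 ^ (2 * n), .of 1 * .of 1 * (.of 0 ^ n)⁻¹, (.of 1)⁻¹ * .of 0 * .of 1 * .of 0}

theorem nonempty_mulEquiv_presentedGroup :
    Nonempty (QuaternionGroup n ≃* PresentedGroup (relators n : Set (FreeGroup (Fin 2)))) := by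
  have hrels : ∀ r ∈ (relators n : Set (FreeGroup (Fin 2))),
      FreeGroup.lift ![(a 1 : QuaternionGroup n), xa 0] r = 1 := by
    have hinv : (xa 0 : QuaternionGroup n)⁻¹ = xa (n + 0) := rfl
    simp [relators, a_one_pow, xa_mul_xa, hinv, xa_mul_a]
  have hrel {r : FreeGroup (Fin 2)} (hr : r ∈ relators n) :
      PresentedGroup.mk (relators n : Set (FreeGroup (Fin 2))) r = 1 :=
    PresentedGroup.one_of_mem hr
  have hA := hrel (r := .of 0 ^ (2 * n)) (by simp [relators])
  have hX := hrel (r := .of 1 * .of 1 * (.of 0 ^ n)⁻¹) (by simp [relators])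
  have hAX := hrel (r := (.of 1)⁻¹ * .of 0 * .of 1 * .of 0) (by simp [relators])
  simp only [map_mul, map_pow, map_inv] at hA hX hAX
  obtain ⟨ψ, hψa, hψxa⟩ := exists_monoidHom_of_relations (A := PresentedGroup.of 0)
    (X := PresentedGroup.of 1) hA (mul_inv_eq_one.1 hX) (mul_eq_one_iff_eq_inv.1 hAX)
  refine ⟨MonoidHom.toMulEquiv ψ (PresentedGroup.toGroup hrels) ?_ ?_⟩
  · exact hom_ext (by simp [hψa]) (by simp [hψxa])
  · refine PresentedGroup.ext fun x => ?_
    fin_cases x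
    · simp [hψa]
    · simp [hψxa]

end QuaternionGroup

theorem finrank_groupCohomology_two_le_of_quaternion_sylow_general
    (F : Type) [Field F] [CharP F 2]
    (Q : Type) [Group Q] [Fintype Q]
    (m : ℕ) (P : Sylow 2 Q)
    (hP : Nonempty (↥(P : Subgroup Q) ≃* QuaternionGroup (2 ^ (m - 1))))
    (M : Rep F Q) [FiniteDimensional F M.V] :
    Module.finrank F (groupCohomology M 2) ≤ 3 * Module.finrank F M.V := by
  obtain ⟨e⟩ := hP
  obtain ⟨e'⟩ := QuaternionGroup.nonempty_mulEquiv_presentedGroup (2 ^ (m - 1))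
  have hindex : IsUnit ((P : Subgroup Q).index : F) :=
    Ne.isUnit <| (CharP.cast_eq_zero_iff F 2 _).not.2 P.not_dvd_index
  have : FiniteDimensional F (Rep.res (P : Subgroup Q).subtype M) := ‹FiniteDimensional F M.V›
  have := groupCohomology.finiteDimensional_H2_of_presentation (e.trans e')
    (Rep.res (P : Subgroup Q).subtype M)
  calc Module.finrank F (groupCohomology M 2)
      ≤ Module.finrank F (groupCohomology (Rep.res (P : Subgroup Q).subtype M) 2) :=
        groupCohomology.finrank_le_finrank_res_of_isUnit_index hindex M 2
    _ ≤ (QuaternionGroup.relators (2 ^ (m - 1))).card * Module.finrank F M.V :=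
        groupCohomology.finrank_H2_le_of_presentation (e.trans e') _
    _ ≤ 3 * Module.finrank F M.V := Nat.mul_le_mul_right _ Finset.card_le_three

/-- Let `F` be a field of characteristic `2`, and let `Q` be a finite group
whose Sylow `2`-subgroup is isomorphic to the generalized quaternion group of order `2^(m+1)`
for some `m ≥ 2` (i.e. to `QuaternionGroup (2^(m-1))`).  Then for every finite-dimensional
`F`-linear representation `M` of `Q`, `dim_F H^2(Q, M) ≤ 3 · dim_F M`. -/
theorem finrank_groupCohomology_two_le_of_quaternion_sylow
    (F : Type) [Field F] [CharP F 2]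
    (Q : Type) [Group Q] [Fintype Q]
    (m : ℕ) (hm : 2 ≤ m) (P : Sylow 2 Q)
    (hP : Nonempty (↥(P : Subgroup Q) ≃* QuaternionGroup (2 ^ (m - 1))))
    (M : Rep F Q) [FiniteDimensional F M.V] :
    Module.finrank F (groupCohomology M 2) ≤ 3 * Module.finrank F M.V :=
  finrank_groupCohomology_two_le_of_quaternion_sylow_general F Q m P hP M
end

section
/- Let p be a prime, Q a finite group, P a Sylow p-subgroup of Q, t = [Q : P] the index of P, and d ≥ 1. Suppose that for each d' with ⌈d/t⌉ ≤ d' ≤ d there is a finite family of at most n_{d'} indecomposable d'-dimensional 𝔽_p-linear representations of P such that every indecomposable d'-dimensional 𝔽_p-linear representation of P is isomorphic to a member of the family. Then there is a finite family of at most t · (Σ_{d'=⌈d/t⌉}^{d} n_{d'}) indecomposable d-dimensional 𝔽_p-linear representations of Q such that every indecomposable d-dimensional 𝔽_p-linear representation of Q is isomorphic to a member of the family. -/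
/-- A representation `M` of `G` over `k` is *indecomposable* if it is nonzero and whenever
`M` is the internal direct sum of two subrepresentations, one of them is zero. -/
def Rep.Indecomposable {k : Type} [Field k] {G : Type} [Group G] (M : Rep.{0} k G) : Prop :=
  Nontrivial M.V ∧ ∀ U V : Submodule k M.V,
    (∀ g : G, ∀ x ∈ U, M.ρ g x ∈ U) → (∀ g : G, ∀ x ∈ V, M.ρ g x ∈ V) →
    U ⊓ V = ⊥ → U ⊔ V = ⊤ → U = ⊥ ∨ V = ⊥

/-- `CoversIndec k G d N` means: there is a family of (at most) `N` representations of `G`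
over `k` such that every indecomposable `d`-dimensional representation of `G` over `k` is
isomorphic to a member of the family. -/
def CoversIndec (k : Type) [Field k] (G : Type) [Group G] (d N : ℕ) : Prop :=
  ∃ f : Fin N → Rep.{0} k G, ∀ M : Rep.{0} k G, FiniteDimensional k M.V →
    M.Indecomposable → Module.finrank k M.V = d → ∃ i, Nonempty (M ≅ f i)

/-!
Since `p ∤ [Q : P]`, every representation `M` of `Q` is a retract of the representation
coinduced from its restriction to `P`: the relative trace, divided by `[Q : P]`, splits the unit
of the adjunction. By Fitting's lemma a finite-dimensional indecomposable representation has a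
local endomorphism ring, so the Krull–Schmidt exchange argument shows that an indecomposable `M`
of dimension `d` is a retract of `coind L` for an indecomposable retract `L` of `res M`. Then
`dim L ≤ d ≤ t · dim L`, i.e. `⌈d/t⌉ ≤ dim L ≤ d`, and `L` is isomorphic to one of the given
representations of `P`. Finally, `coind L` has dimension at most `t · d`, so the same exchange
argument leaves at most `t` isomorphism classes of `d`-dimensional indecomposable retracts of it.
-/

open CategoryTheory Limits Module

namespace CategoryTheory.Retract

variable {C : Type*} [Category C] [Preadditive C] {M N X Y : C}

noncomputable def ofIsIsoComp (f : M ⟶ X) (g : X ⟶ M) [IsIso (f ≫ g)] : Retract M X where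
  i := f
  r := g ≫ inv (f ≫ g)
  retract := by rw [← Category.assoc, IsIso.hom_inv_id]

theorem nonempty_or_of_biprod [HasBinaryBiproduct X Y] [IsLocalRing (End M)]
    (h : Retract M (X ⊞ Y)) : Nonempty (Retract M X) ∨ Nonempty (Retract M Y) := by
  have hsum : (h.i ≫ biprod.fst) ≫ biprod.inl ≫ h.r + (h.i ≫ biprod.snd) ≫ biprod.inr ≫ h.r =
      𝟙 M := by
    have := h.retract
    rw [← Category.id_comp h.r, ← biprod.total] at this
    simpa only [Preadditive.add_comp, Preadditive.comp_add, Category.assoc] using this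
  rcases IsLocalRing.isUnit_or_isUnit_of_add_one (R := End M) hsum with hX | hY
  · rw [isUnit_iff_isIso] at hX
    exact Or.inl ⟨ofIsIsoComp (h.i ≫ biprod.fst) (biprod.inl ≫ h.r)⟩
  · rw [isUnit_iff_isIso] at hY
    exact Or.inr ⟨ofIsIsoComp (h.i ≫ biprod.snd) (biprod.inr ≫ h.r)⟩

theorem nonempty_iso [IsLocalRing (End N)] (h : Retract M N) (hM : 𝟙 M ≠ 0) :
    Nonempty (M ≅ N) := by
  have hsum : h.r ≫ h.i + (𝟙 N - h.r ≫ h.i) = 𝟙 N := add_sub_cancel _ _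
  rcases IsLocalRing.isUnit_or_isUnit_of_add_one (R := End N) hsum with he | he
  · rw [isUnit_iff_isIso] at he
    have : Epi h.i := epi_of_epi h.r h.i
    have : IsIso h.i := isIso_of_epi_of_isSplitMono h.i
    exact ⟨asIso h.i⟩
  · rw [isUnit_iff_isIso] at he
    have hi : h.i ≫ (𝟙 N - h.r ≫ h.i) = 0 ≫ (𝟙 N - h.r ≫ h.i) := by
      rw [zero_comp, Preadditive.comp_sub, ← Category.assoc, h.retract, Category.id_comp,
        Category.comp_id, sub_self]
    exact absurd (by rw [← h.retract, (cancel_mono _).mp hi, zero_comp]) hM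

end CategoryTheory.Retract

namespace Rep

variable {k : Type} [Field k] {G : Type} [Group G]

section Retract

variable {M N : Rep.{0} k G} [FiniteDimensional k N.V]

theorem _root_.CategoryTheory.Retract.finrank_le (h : Retract M N) :
    finrank k M.V ≤ finrank k N.V :=
  LinearMap.finrank_le_finrank_of_injective (f := h.i.hom.toLinearMap)
    ((mono_iff_injective h.i).mp inferInstance)

theorem _root_.CategoryTheory.Retract.finiteDimensional (h : Retract M N) :
    FiniteDimensional k M.V :=
  Module.Finite.of_injective h.i.hom.toLinearMap ((mono_iff_injective h.i).mp inferInstance)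

end Retract

namespace Indecomposable

variable {M : Rep.{0} k G}

theorem not_isZero (hM : M.Indecomposable) : ¬ IsZero M := by
  rw [isZero_iff, not_subsingleton_iff_nontrivial]
  exact hM.1

variable [FiniteDimensional k M.V]

theorem bijective_or_isNilpotent (hM : M.Indecomposable) (a : M ⟶ M) :
    Function.Bijective a.hom ∨ IsNilpotent a.hom.toLinearMap := by
  set T := a.hom.toLinearMap
  have hcomm (g : G) : Commute T (M.ρ g) := a.hom.isIntertwining' g
  obtain ⟨n, hn, hn0⟩ :=
    (T.eventually_isCompl_ker_pow_range_pow.and (Filter.eventually_gt_atTop 0)).exists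
  have hker (g : G) : ∀ x ∈ LinearMap.ker (T ^ n), M.ρ g x ∈ LinearMap.ker (T ^ n) := by
    intro x hx
    rw [LinearMap.mem_ker] at hx ⊢
    rw [← Module.End.mul_apply, ((hcomm g).pow_left n).eq, Module.End.mul_apply, hx, map_zero]
  have hrange (g : G) : ∀ x ∈ LinearMap.range (T ^ n), M.ρ g x ∈ LinearMap.range (T ^ n) := by
    rintro _ ⟨y, rfl⟩
    exact ⟨M.ρ g y, by rw [← Module.End.mul_apply, ((hcomm g).pow_left n).eq]; rfl⟩
  rcases hM.2 _ _ hker hrange hn.inf_eq_bot hn.sup_eq_top with h | h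
  · have hinj : Function.Injective (T ^ (n - 1) * T) := by
      rw [pow_sub_one_mul hn0.ne']
      exact LinearMap.ker_eq_bot.mp h
    have hT : Function.Injective T := Function.Injective.of_comp hinj
    exact Or.inl ⟨hT, LinearMap.injective_iff_surjective.mp hT⟩
  · exact Or.inr ⟨n, LinearMap.range_eq_bot.mp h⟩

theorem isLocalRing_end (hM : M.Indecomposable) : IsLocalRing (End M) := by
  have : Nontrivial (End M) := by
    obtain ⟨x, hx⟩ := @exists_ne M.V hM.1 0
    exact nontrivial_of_ne (𝟙 M) 0 fun h => hx (congrArg (fun f : M ⟶ M => f.hom x) h)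
  refine IsLocalRing.of_isUnit_or_isUnit_one_sub_self fun a => ?_
  simp only [isUnit_iff_isIso, ConcreteCategory.isIso_iff_bijective]
  rcases hM.bijective_or_isNilpotent a with ha | ha
  · exact Or.inl ha
  · exact Or.inr ((Module.End.isUnit_iff _).mp ha.isUnit_one_sub)

end Indecomposable

section Complement

variable (N : Rep.{0} k G) {U V : Submodule k N.V} (hU : ∀ g, U ≤ U.comap (N.ρ g))
  (hV : ∀ g, V ≤ V.comap (N.ρ g))

noncomputable def projectionOnto (h : IsCompl U V) : N ⟶ N.subrepresentation U hU :=
  Rep.ofHom ⟨U.projectionOnto V h, fun g => LinearMap.ext fun x => Subtype.ext <| by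
    dsimp [Representation.subrepresentation]
    conv_lhs => rw [← U.projection_add_projection_eq_self h x]
    rw [map_add, map_add, U.projection_apply_of_mem_left h (hU g (U.projection_apply_mem h x)),
      (U.projection_apply_eq_zero_iff h).mpr (hV g (V.projection_apply_mem h.symm x)), add_zero]⟩

noncomputable def isoBiprodOfIsCompl (h : IsCompl U V) :
    N ≅ N.subrepresentation U hU ⊞ N.subrepresentation V hV :=
  biprod.uniqueUpToIso _ _ (isBinaryBilimitOfTotal
    { pt := N
      fst := projectionOnto N hU hV h
      snd := projectionOnto N hV hU h.symm
      inl := Rep.subtype N U hU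
      inr := Rep.subtype N V hV
      inl_fst := by ext x; exact congrArg Subtype.val <| U.projectionOnto_apply_left h x
      inl_snd := by ext x; exact congrArg Subtype.val <| V.projectionOnto_apply_right h.symm x
      inr_fst := by ext x; exact congrArg Subtype.val <| U.projectionOnto_apply_right h x
      inr_snd := by ext x; exact congrArg Subtype.val <| V.projectionOnto_apply_left h.symm x }
    (by ext x; exact U.projection_add_projection_eq_self h x))

end Complement

theorem exists_iso_biprod_of_not_indecomposable {N : Rep.{0} k G} [FiniteDimensional k N.V]
    (hN : Nontrivial N.V) (h : ¬ N.Indecomposable) :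
    ∃ U V : Rep.{0} k G, FiniteDimensional k U.V ∧ FiniteDimensional k V.V ∧
      finrank k U.V < finrank k N.V ∧ finrank k V.V < finrank k N.V ∧
      finrank k U.V + finrank k V.V = finrank k N.V ∧ Nonempty (N ≅ U ⊞ V) := by
  simp only [Indecomposable, hN, true_and, not_forall, not_or] at h
  obtain ⟨U, V, hU, hV, hinf, hsup, hU0, hV0⟩ := h
  have hcompl : IsCompl U V := ⟨disjoint_iff.mpr hinf, codisjoint_iff.mpr hsup⟩
  have hsum := Submodule.finrank_add_eq_of_isCompl hcompl
  have hU0 := Submodule.finrank_eq_zero.not.mpr hU0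
  have hV0 := Submodule.finrank_eq_zero.not.mpr hV0
  have hU' : ∀ g, U ≤ U.comap (N.ρ g) := fun g x hx => hU g x hx
  have hV' : ∀ g, V ≤ V.comap (N.ρ g) := fun g x hx => hV g x hx
  exact ⟨N.subrepresentation U hU', N.subrepresentation V hV',
    inferInstanceAs (FiniteDimensional k U), inferInstanceAs (FiniteDimensional k V),
    by dsimp; omega, by dsimp; omega, hsum, ⟨isoBiprodOfIsCompl N hU' hV' hcompl⟩⟩

theorem induction_on_indecomposable {motive : Rep.{0} k G → Prop}
    (zero : ∀ N, IsZero N → motive N)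
    (indecomposable : ∀ N, FiniteDimensional k N.V → N.Indecomposable → motive N)
    (biprod : ∀ N U V, (N ≅ U ⊞ V) → finrank k U.V + finrank k V.V = finrank k N.V →
      motive U → motive V → motive N)
    (N : Rep.{0} k G) [FiniteDimensional k N.V] : motive N := by
  induction hN : finrank k N.V using Nat.strong_induction_on generalizing N with
  | _ n ih =>
  rcases subsingleton_or_nontrivial N.V with hN0 | hN0
  · exact zero N ((isZero_iff k G N).mpr hN0)
  by_cases hind : N.Indecomposable
  · exact indecomposable N inferInstance hind
  obtain ⟨U, V, _, _, hU, hV, hsum, ⟨e⟩⟩ := exists_iso_biprod_of_not_indecomposable hN0 hind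
  exact biprod N U V e hsum (ih _ (hN ▸ hU) U rfl) (ih _ (hN ▸ hV) V rfl)

theorem exists_indecomposable_retract {C : Type*} [Category C] [Preadditive C]
    [HasBinaryBiproducts C] (F : Rep.{0} k G ⥤ C) [F.Additive] {M : C} [IsLocalRing (End M)]
    (N : Rep.{0} k G) [FiniteDimensional k N.V] (h : Retract M (F.obj N)) :
    ∃ L : Rep.{0} k G, L.Indecomposable ∧ Nonempty (Retract L N) ∧
      Nonempty (Retract M (F.obj L)) := by
  have : PreservesBinaryBiproducts F := preservesBinaryBiproducts_of_preservesBiproducts F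
  induction N using induction_on_indecomposable with
  | zero N hN =>
    have hM : IsZero M := IsZero.of_mono h.i (F.map_isZero hN)
    exact absurd ((IsZero.iff_id_eq_zero M).mp hM) (one_ne_zero (α := End M))
  | indecomposable N _ hN => exact ⟨N, hN, ⟨Retract.refl N⟩, ⟨h⟩⟩
  | biprod N U V e _ ihU ihV =>
    rcases (h.trans (.ofIso (F.mapIso e ≪≫ F.mapBiprod U V))).nonempty_or_of_biprod with
      ⟨⟨hU⟩⟩ | ⟨⟨hV⟩⟩
    · obtain ⟨L, hL, ⟨hLU⟩, hML⟩ := ihU hU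
      exact ⟨L, hL, ⟨(hLU.trans ⟨biprod.inl, biprod.fst, by simp⟩).trans (.ofIso e.symm)⟩, hML⟩
    · obtain ⟨L, hL, ⟨hLV⟩, hML⟩ := ihV hV
      exact ⟨L, hL, ⟨(hLV.trans ⟨biprod.inr, biprod.snd, by simp⟩).trans (.ofIso e.symm)⟩, hML⟩

theorem exists_finset_covering_retracts (d : ℕ) (J : Rep.{0} k G) [FiniteDimensional k J.V] :
    ∃ s : Finset (Rep.{0} k G), s.card * d ≤ finrank k J.V ∧
      ∀ M : Rep.{0} k G, FiniteDimensional k M.V → M.Indecomposable → finrank k M.V = d →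
        Nonempty (Retract M J) → ∃ X ∈ s, Nonempty (M ≅ X) := by
  classical
  induction J using induction_on_indecomposable with
  | zero J hJ =>
    exact ⟨∅, by simp, fun M _ hM _ ⟨h⟩ => absurd (IsZero.of_mono h.i hJ) hM.not_isZero⟩
  | indecomposable J _ hJ =>
    have := hJ.isLocalRing_end
    by_cases hd : d ≤ finrank k J.V
    · refine ⟨{J}, by simpa using hd, fun M _ hM _ ⟨h⟩ => ⟨J, Finset.mem_singleton_self J, ?_⟩⟩
      have := hM.isLocalRing_end
      exact h.nonempty_iso (one_ne_zero (α := End M))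
    · exact ⟨∅, by simp, fun M _ _ hMd ⟨h⟩ => absurd (hMd ▸ h.finrank_le) hd⟩
  | biprod J U V e hsum ihU ihV =>
    obtain ⟨sU, hsU, hU⟩ := ihU
    obtain ⟨sV, hsV, hV⟩ := ihV
    refine ⟨sU ∪ sV, ?_, fun M hMfd hM hMd ⟨h⟩ => ?_⟩
    · calc (sU ∪ sV).card * d ≤ (sU.card + sV.card) * d := by
            gcongr; exact Finset.card_union_le _ _
        _ ≤ finrank k J.V := by rw [add_mul, ← hsum]; omega
    · have := hM.isLocalRing_end
      rcases (h.trans (.ofIso e)).nonempty_or_of_biprod with hMU | hMV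
      · obtain ⟨X, hX, hMX⟩ := hU M hMfd hM hMd hMU
        exact ⟨X, Finset.mem_union_left _ hX, hMX⟩
      · obtain ⟨X, hX, hMX⟩ := hV M hMfd hM hMd hMV
        exact ⟨X, Finset.mem_union_right _ hX, hMX⟩

section Coinduction

variable {Q : Type} [Group Q]

instance {H : Type} [Monoid H] (φ : H →* Q) : (coindFunctor.{0} k φ).Additive where
  map_add := rfl

instance {H : Type} [Monoid H] [Finite Q] (φ : H →* Q) (L : Rep.{0} k H)
    [FiniteDimensional k L.V] : FiniteDimensional k (coind φ L).V :=
  inferInstanceAs (FiniteDimensional k (Representation.coindV φ L.ρ))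

variable (S : Subgroup Q) (M : Rep.{0} k Q)

theorem coind_res_ρ_inv_eq_out (F : coind S.subtype (res S.subtype M)) (q : Q) :
    M.ρ q (F.1 q⁻¹) = M.ρ (q : Q ⧸ S).out (F.1 (q : Q ⧸ S).out⁻¹) := by
  obtain ⟨s, hs⟩ := QuotientGroup.mk_out_eq_mul S q
  have hF : F.1 ((s : Q)⁻¹ * q⁻¹) = M.ρ (s : Q)⁻¹ (F.1 q⁻¹) := F.2 s⁻¹ q⁻¹
  rw [hs, mul_inv_rev, hF, ← Module.End.mul_apply, ← map_mul, mul_inv_cancel_right]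

attribute [local instance] Subgroup.fintypeQuotientOfFiniteIndex

variable [S.FiniteIndex]

theorem finrank_coind_le (L : Rep.{0} k S) [FiniteDimensional k L.V] :
    finrank k (coind S.subtype L).V ≤ S.index * finrank k L.V := by
  let restrict : coind S.subtype L →ₗ[k] (Q ⧸ S → L.V) :=
    LinearMap.pi fun y => LinearMap.proj y.out⁻¹ ∘ₗ Submodule.subtype _
  have hinj : Function.Injective restrict := by
    rw [← LinearMap.ker_eq_bot, eq_bot_iff]
    intro F hF
    rw [Submodule.mem_bot]
    refine Subtype.ext (funext fun q => ?_)
    obtain ⟨s, hs⟩ := QuotientGroup.mk_out_eq_mul S q⁻¹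
    have h0 : F.1 (QuotientGroup.mk (s := S) q⁻¹).out⁻¹ = 0 := congrFun hF _
    rw [hs, mul_inv_rev, inv_inv] at h0
    calc F.1 q = F.1 (S.subtype s * ((s : Q)⁻¹ * q)) := by simp
      _ = L.ρ s (F.1 ((s : Q)⁻¹ * q)) := F.2 s _
      _ = 0 := by rw [h0, map_zero]
  calc finrank k (coind S.subtype L).V ≤ finrank k (Q ⧸ S → L.V) :=
        LinearMap.finrank_le_finrank_of_injective hinj
    _ = S.index * finrank k L.V := by
        rw [Module.finrank_pi_fintype, Finset.sum_const, Finset.card_univ, smul_eq_mul,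
          S.index_eq_card, Nat.card_eq_fintype_card]

/-- The relative trace `F ↦ ∑_{y ∈ Q/S} y • F y⁻¹`; by `coind_res_ρ_inv_eq_out` its summands do
not depend on the choice of coset representatives, which makes it `Q`-equivariant. -/
noncomputable def coindResTrace : coind S.subtype (res S.subtype M) ⟶ M :=
  Rep.ofHom ⟨∑ y : Q ⧸ S, M.ρ y.out ∘ₗ LinearMap.proj y.out⁻¹ ∘ₗ Submodule.subtype _, fun h => by
    ext F
    simp only [LinearMap.comp_apply, LinearMap.sum_apply, map_sum]
    change ∑ y : Q ⧸ S, M.ρ y.out (F.1 (y.out⁻¹ * h)) =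
      ∑ y : Q ⧸ S, M.ρ h (M.ρ y.out (F.1 y.out⁻¹))
    have key (y : Q ⧸ S) : M.ρ y.out (F.1 (y.out⁻¹ * h)) =
        M.ρ h (M.ρ (h⁻¹ • y).out (F.1 (h⁻¹ • y).out⁻¹)) := by
      have hy : ((h⁻¹ * y.out : Q) : Q ⧸ S) = h⁻¹ • y := by
        conv_rhs => rw [← QuotientGroup.out_eq' y]
        rfl
      rw [← hy, ← coind_res_ρ_inv_eq_out S M F, ← Module.End.mul_apply, ← map_mul,
        mul_inv_cancel_left, mul_inv_rev, inv_inv]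
    rw [Finset.sum_congr rfl fun y _ => key y]
    exact Equiv.sum_comp (MulAction.toPerm h⁻¹) fun y : Q ⧸ S => M.ρ h (M.ρ y.out (F.1 y.out⁻¹))⟩

theorem coindResTrace_apply (F : coind S.subtype (res S.subtype M)) :
    (coindResTrace S M).hom F = ∑ y : Q ⧸ S, M.ρ y.out (F.1 y.out⁻¹) := by
  simp [coindResTrace, LinearMap.sum_apply]

noncomputable def retractCoindRes (hS : (S.index : k) ≠ 0) :
    Retract M (coind S.subtype (res S.subtype M)) where
  i := resCoindToHom S.subtype M (res S.subtype M) (𝟙 _)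
  r := (S.index : k)⁻¹ • coindResTrace S M
  retract := by
    ext m
    change (S.index : k)⁻¹ • (coindResTrace S M).hom _ = m
    rw [coindResTrace_apply]
    change (S.index : k)⁻¹ • ∑ y : Q ⧸ S, M.ρ y.out (M.ρ y.out⁻¹ m) = m
    simp_rw [← Module.End.mul_apply, ← map_mul, mul_inv_cancel, map_one, Module.End.one_apply]
    rw [Finset.sum_const, Finset.card_univ, ← Nat.card_eq_fintype_card, ← S.index_eq_card,
      ← Nat.cast_smul_eq_nsmul k, smul_smul, inv_mul_cancel₀ hS, one_smul]

end Coinduction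

theorem exists_indecomposable_retract_coind {Q : Type} [Group Q] [Finite Q] (S : Subgroup Q)
    (hS : (S.index : k) ≠ 0) (M : Rep.{0} k Q) [FiniteDimensional k M.V]
    (hM : M.Indecomposable) :
    ∃ L : Rep.{0} k S, L.Indecomposable ∧ FiniteDimensional k L.V ∧
      finrank k L.V ≤ finrank k M.V ∧ finrank k M.V ≤ S.index * finrank k L.V ∧
      Nonempty (Retract M (coind S.subtype L)) := by
  have := hM.isLocalRing_end
  obtain ⟨L, hL, ⟨hLM⟩, ⟨hML⟩⟩ := exists_indecomposable_retract (coindFunctor k S.subtype)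
    (res S.subtype M) (retractCoindRes S M hS)
  have := hLM.finiteDimensional
  replace hML : Retract M (coind S.subtype L) := hML
  exact ⟨L, hL, this, hLM.finrank_le, hML.finrank_le.trans (finrank_coind_le S L), ⟨hML⟩⟩

end Rep

namespace CoversIndec

variable {k : Type} [Field k] {G : Type} [Group G] {d N : ℕ}

theorem exists_finrank_eq (h : CoversIndec k G d N) :
    ∃ f : Fin N → Rep.{0} k G, (∀ i, FiniteDimensional k (f i).V ∧ finrank k (f i).V = d) ∧
      ∀ M : Rep.{0} k G, FiniteDimensional k M.V → M.Indecomposable → finrank k M.V = d →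
        ∃ i, Nonempty (M ≅ f i) := by
  classical
  obtain ⟨f, hf⟩ := h
  let good (X : Rep.{0} k G) : Prop := FiniteDimensional k X.V ∧ finrank k X.V = d
  refine ⟨fun i => if good (f i) then f i else Rep.trivial k G (Fin d → k), fun i => ?_,
    fun M hMfd hM hMd => ?_⟩
  · show good (if good (f i) then f i else Rep.trivial k G (Fin d → k))
    rw [apply_ite good]
    split_ifs with hi
    · exact hi
    · exact ⟨inferInstanceAs (FiniteDimensional k (Fin d → k)), Module.finrank_fin_fun k⟩
  · obtain ⟨i, ⟨e⟩⟩ := hf M hMfd hM hMd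
    have hi : good (f i) := by
      have := (Retract.ofIso e.symm).finiteDimensional
      exact ⟨this, hMd ▸ le_antisymm (Retract.ofIso e.symm).finrank_le (Retract.ofIso e).finrank_le⟩
    exact ⟨i, ⟨e.trans (eqToIso (if_pos hi).symm)⟩⟩

theorem of_finset (s : Finset (Rep.{0} k G)) (hs : s.card ≤ N)
    (h : ∀ M : Rep.{0} k G, FiniteDimensional k M.V → M.Indecomposable → finrank k M.V = d →
      ∃ X ∈ s, Nonempty (M ≅ X)) :
    CoversIndec k G d N := by
  refine ⟨fun i => if hi : (i : ℕ) < s.card then s.equivFin.symm ⟨i, hi⟩ else default,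
    fun M hMfd hM hMd => ?_⟩
  obtain ⟨X, hX, ⟨e⟩⟩ := h M hMfd hM hMd
  exact ⟨Fin.castLE hs (s.equivFin ⟨X, hX⟩), ⟨e.trans (eqToIso (by simp))⟩⟩

open Rep in
theorem exists_finset_covering_retracts_coind {Q : Type} [Group Q] [Finite Q] {S : Subgroup Q}
    {d d' m : ℕ} (hd : 0 < d) (hd' : d' ≤ d) (h : CoversIndec k S d' m) :
    ∃ s : Finset (Rep.{0} k Q), s.card ≤ S.index * m ∧
      ∀ L : Rep.{0} k S, FiniteDimensional k L.V → L.Indecomposable → finrank k L.V = d' →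
      ∀ M : Rep.{0} k Q, FiniteDimensional k M.V → M.Indecomposable → finrank k M.V = d →
        Nonempty (Retract M (coind S.subtype L)) → ∃ X ∈ s, Nonempty (M ≅ X) := by
  classical
  obtain ⟨f, hf, hcov⟩ := h.exists_finrank_eq
  have hT (i : Fin m) : ∃ T : Finset (Rep.{0} k Q), T.card ≤ S.index ∧
      ∀ M : Rep.{0} k Q, FiniteDimensional k M.V → M.Indecomposable → finrank k M.V = d →
        Nonempty (Retract M (coind S.subtype (f i))) → ∃ X ∈ T, Nonempty (M ≅ X) := by
    have := (hf i).1
    obtain ⟨T, hTcard, hT⟩ := exists_finset_covering_retracts d (coind S.subtype (f i))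
    refine ⟨T, Nat.le_of_mul_le_mul_right ?_ hd, hT⟩
    calc T.card * d ≤ S.index * finrank k (f i).V := hTcard.trans (finrank_coind_le S (f i))
      _ ≤ S.index * d := by rw [(hf i).2]; gcongr
  choose T hTcard hT using hT
  refine ⟨Finset.univ.biUnion T, ?_, fun L hLfd hL hLd M hMfd hM hMd ⟨hML⟩ => ?_⟩
  · calc (Finset.univ.biUnion T).card ≤ Finset.univ.card * S.index :=
        Finset.card_biUnion_le_card_mul _ _ _ fun i _ => hTcard i
      _ = S.index * m := by rw [Finset.card_univ, Fintype.card_fin, mul_comm]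
  · obtain ⟨i, ⟨e⟩⟩ := hcov L hLfd hL hLd
    obtain ⟨X, hX, hMX⟩ :=
      hT i M hMfd hM hMd ⟨hML.trans (.ofIso ((coindFunctor k S.subtype).mapIso e))⟩
    exact ⟨X, Finset.mem_biUnion.mpr ⟨i, Finset.mem_univ i, hX⟩, hMX⟩

end CoversIndec

theorem coversIndec_of_index_ne_zero {k : Type} [Field k] {Q : Type} [Group Q] [Finite Q]
    (S : Subgroup Q) (hS : (S.index : k) ≠ 0) {d : ℕ} (hd : 0 < d) (n : ℕ → ℕ)
    (h : ∀ d', (d + S.index - 1) / S.index ≤ d' → d' ≤ d → CoversIndec k S d' (n d')) :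
    CoversIndec k Q d (S.index * ∑ d' ∈ Finset.Icc ((d + S.index - 1) / S.index) d, n d') := by
  classical
  set t := S.index
  set lo := (d + t - 1) / t with hlo
  have ht : 0 < t := Nat.pos_of_ne_zero fun h0 => hS (by simp [t, h0])
  choose B hBcard hBcov using fun d' (hd' : d' ∈ Finset.Icc lo d) =>
    (h d' (Finset.mem_Icc.mp hd').1 (Finset.mem_Icc.mp hd').2).exists_finset_covering_retracts_coind
      hd (Finset.mem_Icc.mp hd').2
  refine CoversIndec.of_finset ((Finset.Icc lo d).attach.biUnion fun x => B x.1 x.2) ?_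
    fun M hMfd hM hMd => ?_
  · calc _ ≤ ∑ x ∈ (Finset.Icc lo d).attach, t * n x :=
          Finset.card_biUnion_le.trans (Finset.sum_le_sum fun x _ => hBcard x.1 x.2)
      _ = t * ∑ d' ∈ Finset.Icc lo d, n d' := by
          rw [Finset.sum_attach (Finset.Icc lo d) fun d' => t * n d', Finset.mul_sum]
  · obtain ⟨L, hL, hLfd, hLM, hML, hret⟩ := Rep.exists_indecomposable_retract_coind S hS M hM
    have hLd : finrank k L.V ∈ Finset.Icc lo d := by
      refine Finset.mem_Icc.mpr ⟨?_, hMd ▸ hLM⟩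
      have hdL : d ≤ t * finrank k L.V := hMd ▸ hML
      rw [hlo, Nat.div_le_iff_le_mul_add_pred ht]
      omega
    obtain ⟨X, hX, hMX⟩ := hBcov _ hLd L hLfd hL rfl M hMfd hM hMd hret
    exact ⟨X, Finset.mem_biUnion.mpr ⟨⟨_, hLd⟩, Finset.mem_attach _ _, hX⟩, hMX⟩

/-- Let `p` be a prime, `Q` a finite group, `P` a Sylow `p`-subgroup of
`Q`, `t = [Q : P]`, and `d ≥ 1`.  If for each `d'` with `⌈d/t⌉ ≤ d' ≤ d` the indecomposable
`d'`-dimensional `𝔽_p`-representations of `P` fall into at most `n d'` isomorphism classes,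
then the indecomposable `d`-dimensional `𝔽_p`-representations of `Q` fall into at most
`t * ∑_{d' = ⌈d/t⌉}^{d} n d'` isomorphism classes. -/
theorem coversIndec_of_sylow
    (p : ℕ) [Fact p.Prime] (Q : Type) [Group Q] [Fintype Q]
    (P : Sylow p Q) (t d : ℕ) (ht : t = (P : Subgroup Q).index) (hd : 1 ≤ d)
    (n : ℕ → ℕ)
    (hP : ∀ d', (d + t - 1) / t ≤ d' → d' ≤ d →
      CoversIndec (ZMod p) ↥(P : Subgroup Q) d' (n d')) :
    CoversIndec (ZMod p) Q d (t * ∑ d' ∈ Finset.Icc ((d + t - 1) / t) d, n d') := by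
  subst ht
  exact coversIndec_of_index_ne_zero (P : Subgroup Q)
    (fun h => P.not_dvd_index ((ZMod.natCast_eq_zero_iff _ p).mp h)) hd n hP
end

section
/- Let p be a prime, d ≥ 1, and let J be the d×d Jordan block over 𝔽_p (the matrix with 1 in every entry (i, i+1) of the superdiagonal and 0 elsewhere, possibly shifted by a scalar multiple of the identity). Define a relation on d×d matrices over 𝔽_p by B ~ B' if and only if there exists an invertible d×d matrix C over 𝔽_p with C·J = J·C and C·B = B'·C. Then ~ is an equivalence relation on the set of d×d matrices over 𝔽_p, and the number of its equivalence classes is at least p^{d² − d}. -/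
section aux
variable {p d : ℕ}

lemma JC_entry (J C : Matrix (Fin d) (Fin d) (ZMod p))
    (hJ : ∀ i j : Fin d, J i j = if (i : ℕ) + 1 = (j : ℕ) then 1 else 0)
    (i j : Fin d) :
    (J * C) i j = if h : (i : ℕ) + 1 < d then C ⟨i + 1, h⟩ j else 0 := by
  rw [Matrix.mul_apply]
  split_ifs with h
  · rw [Finset.sum_eq_single (⟨i + 1, h⟩ : Fin d)]
    · simp [hJ]
    · intro k _ hk
      rw [hJ]
      have : ¬ ((i : ℕ) + 1 = (k : ℕ)) := fun hc => hk (by ext; simp [← hc])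
      simp [this]
    · simp
  · apply Finset.sum_eq_zero
    intro k _
    rw [hJ]
    have : ¬ ((i : ℕ) + 1 = (k : ℕ)) := fun hc => h (hc ▸ k.isLt)
    simp [this]

lemma CJ_entry (J C : Matrix (Fin d) (Fin d) (ZMod p))
    (hJ : ∀ i j : Fin d, J i j = if (i : ℕ) + 1 = (j : ℕ) then 1 else 0)
    (i j : Fin d) :
    (C * J) i j = if h : (j : ℕ) ≠ 0 then C i ⟨(j : ℕ) - 1, lt_of_le_of_lt (Nat.sub_le _ _) j.isLt⟩ else 0 := by
  rw [Matrix.mul_apply]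
  split_ifs with h
  · rw [Finset.sum_eq_single (⟨(j : ℕ) - 1, lt_of_le_of_lt (Nat.sub_le _ _) j.isLt⟩ : Fin d)]
    · have he : (j : ℕ) - 1 + 1 = (j : ℕ) := Nat.succ_pred_eq_of_pos (Nat.pos_of_ne_zero h)
      rw [hJ, if_pos he, mul_one]
    · intro k _ hk
      rw [hJ]
      have : ¬ ((k : ℕ) + 1 = (j : ℕ)) := by
        intro hc
        apply hk
        ext
        simp [← hc]
      simp [this]
    · simp
  · apply Finset.sum_eq_zero
    intro k _
    rw [hJ]
    push_neg at h
    simp [h, Nat.succ_ne_zero]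

lemma commutant_row_det (J : Matrix (Fin d) (Fin d) (ZMod p))
    (hJ : ∀ i j : Fin d, J i j = if (i : ℕ) + 1 = (j : ℕ) then 1 else 0)
    (C C' : Matrix (Fin d) (Fin d) (ZMod p))
    (hC : C * J = J * C) (hC' : C' * J = J * C')
    (hd : 1 ≤ d)
    (hrow : ∀ j, C ⟨0, hd⟩ j = C' ⟨0, hd⟩ j) : C = C' := by
  have key : ∀ n (hn : n < d) (j : Fin d), C ⟨n, hn⟩ j = C' ⟨n, hn⟩ j := by
    intro n
    induction n with
    | zero => intro hn j; exact hrow j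
    | succ m ih =>
      intro hn j
      have hm : m < d := Nat.lt_of_succ_lt hn
      have e1 := congrFun (congrFun hC ⟨m, hm⟩) j
      have e2 := congrFun (congrFun hC' ⟨m, hm⟩) j
      rw [CJ_entry J C hJ, JC_entry J C hJ] at e1
      rw [CJ_entry J C' hJ, JC_entry J C' hJ] at e2
      simp only [show (⟨m, hm⟩ : Fin d).val + 1 < d from hn, dite_true] at e1 e2
      rw [← e1, ← e2]
      split_ifs with h
      · exact ih hm _
      · rfl
  ext i j
  have := key i.val i.isLt j
  simpa using this

end aux

/-- Let `p` be a prime, `d ≥ 1`, and `J` the `d×d` (nilpotent) Jordan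
block over `𝔽_p`.  Define `B ~ B'` iff there is an invertible matrix `C` with `C·J = J·C`
and `C·B = B'·C`.  Then `~` is an equivalence relation on `d×d` matrices over `𝔽_p`, and the
number of its equivalence classes is at least `p^(d² - d)`. -/
theorem jordan_commutant_conjugacy_classes
    (p : ℕ) [Fact p.Prime] (d : ℕ) (hd : 1 ≤ d)
    (J : Matrix (Fin d) (Fin d) (ZMod p))
    (hJ : ∀ i j : Fin d, J i j = if (i : ℕ) + 1 = (j : ℕ) then 1 else 0)
    (r : Matrix (Fin d) (Fin d) (ZMod p) → Matrix (Fin d) (Fin d) (ZMod p) → Prop)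
    (hr : ∀ B B', r B B' ↔ ∃ C : Matrix (Fin d) (Fin d) (ZMod p),
      IsUnit C ∧ C * J = J * C ∧ C * B = B' * C) :
    Equivalence r ∧ p ^ (d ^ 2 - d) ≤ Nat.card (Quot r) := by
  classical
  have hEq : Equivalence r := by
    constructor
    · intro B
      exact (hr B B).mpr ⟨1, isUnit_one, by simp, by simp⟩
    · intro B B' h
      obtain ⟨C, hCu, hCJ, hCB⟩ := (hr B B').mp h
      have hdet : IsUnit C.det := (Matrix.isUnit_iff_isUnit_det C).mp hCu
      have h1 : C⁻¹ * C = 1 := Matrix.nonsing_inv_mul C hdet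
      have h2 : C * C⁻¹ = 1 := Matrix.mul_nonsing_inv C hdet
      refine (hr B' B).mpr ⟨C⁻¹, ⟨⟨C⁻¹, C, h1, h2⟩, rfl⟩, ?_, ?_⟩
      · calc C⁻¹ * J = C⁻¹ * J * (C * C⁻¹) := by rw [h2, mul_one]
          _ = C⁻¹ * (J * C) * C⁻¹ := by noncomm_ring
          _ = C⁻¹ * (C * J) * C⁻¹ := by rw [hCJ]
          _ = (C⁻¹ * C) * (J * C⁻¹) := by noncomm_ring
          _ = J * C⁻¹ := by rw [h1, one_mul]
      · calc C⁻¹ * B' = C⁻¹ * B' * (C * C⁻¹) := by rw [h2, mul_one]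
          _ = C⁻¹ * (B' * C) * C⁻¹ := by noncomm_ring
          _ = C⁻¹ * (C * B) * C⁻¹ := by rw [hCB]
          _ = (C⁻¹ * C) * (B * C⁻¹) := by noncomm_ring
          _ = B * C⁻¹ := by rw [h1, one_mul]
    · intro B B' B'' h h'
      obtain ⟨C, hCu, hCJ, hCB⟩ := (hr B B').mp h
      obtain ⟨C', hCu', hCJ', hCB'⟩ := (hr B' B'').mp h'
      refine (hr B B'').mpr ⟨C' * C, hCu'.mul hCu, ?_, ?_⟩
      · calc C' * C * J = C' * (C * J) := by noncomm_ring
          _ = C' * (J * C) := by rw [hCJ]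
          _ = (C' * J) * C := by noncomm_ring
          _ = (J * C') * C := by rw [hCJ']
          _ = J * (C' * C) := by noncomm_ring
      · calc C' * C * B = C' * (C * B) := by noncomm_ring
          _ = C' * (B' * C) := by rw [hCB]
          _ = (C' * B') * C := by noncomm_ring
          _ = (B'' * C') * C := by rw [hCB']
          _ = B'' * (C' * C) := by noncomm_ring
  refine ⟨hEq, ?_⟩
  haveI : Finite (Quot r) := Quot.finite r
  haveI : Fintype (Quot r) := Fintype.ofFinite _
  -- fiber bound
  have hfiber : ∀ q : Quot r,
      Fintype.card {B : Matrix (Fin d) (Fin d) (ZMod p) // Quot.mk r B = q} ≤ p ^ d := by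
    intro q
    obtain ⟨B₀, rfl⟩ := Quot.exists_rep q
    have hrel : ∀ B : {B : Matrix (Fin d) (Fin d) (ZMod p) // Quot.mk r B = Quot.mk r B₀},
        r B₀ B.val := by
      intro B
      have := B.prop
      have h := Quot.eq.mp this.symm
      exact (Equivalence.eqvGen_iff hEq).mp h
    set F : {B : Matrix (Fin d) (Fin d) (ZMod p) // Quot.mk r B = Quot.mk r B₀} →
        (Fin d → ZMod p) :=
      fun B => (Classical.choose ((hr B₀ B.val).mp (hrel B))) ⟨0, hd⟩ with hF
    have hFinj : Function.Injective F := by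
      intro B₁ B₂ hFeq
      obtain ⟨hu₁, hJ₁, hB₁⟩ := Classical.choose_spec ((hr B₀ B₁.val).mp (hrel B₁))
      obtain ⟨hu₂, hJ₂, hB₂⟩ := Classical.choose_spec ((hr B₀ B₂.val).mp (hrel B₂))
      have hCeq : Classical.choose ((hr B₀ B₁.val).mp (hrel B₁)) =
          Classical.choose ((hr B₀ B₂.val).mp (hrel B₂)) :=
        commutant_row_det J hJ _ _ hJ₁ hJ₂ hd (congrFun hFeq)
      rw [hCeq] at hB₁
      have : B₁.val * Classical.choose ((hr B₀ B₂.val).mp (hrel B₂)) =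
          B₂.val * Classical.choose ((hr B₀ B₂.val).mp (hrel B₂)) := by
        rw [← hB₁, hB₂]
      exact Subtype.ext (hu₂.mul_right_cancel this)
    calc Fintype.card {B : Matrix (Fin d) (Fin d) (ZMod p) // Quot.mk r B = Quot.mk r B₀}
        ≤ Fintype.card (Fin d → ZMod p) := Fintype.card_le_of_injective F hFinj
      _ = p ^ d := by simp [ZMod.card]
  -- total count
  have hcard : Fintype.card (Matrix (Fin d) (Fin d) (ZMod p)) =
      ∑ q : Quot r, Fintype.card {B : Matrix (Fin d) (Fin d) (ZMod p) // Quot.mk r B = q} := by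
    rw [← Fintype.card_sigma]
    exact (Fintype.card_congr (Equiv.sigmaFiberEquiv (Quot.mk r)).symm)
  have htot : Fintype.card (Matrix (Fin d) (Fin d) (ZMod p)) = p ^ (d * d) := by
    calc Fintype.card (Matrix (Fin d) (Fin d) (ZMod p))
        = Fintype.card (Fin d → Fin d → ZMod p) := Fintype.card_congr (Equiv.refl _)
      _ = p ^ (d * d) := by simp [ZMod.card, pow_mul]
  have hle : p ^ (d * d) ≤ Fintype.card (Quot r) * p ^ d := by
    rw [← htot, hcard]
    calc (∑ q : Quot r, Fintype.card {B : Matrix (Fin d) (Fin d) (ZMod p) // Quot.mk r B = q})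
        ≤ ∑ _q : Quot r, p ^ d := Finset.sum_le_sum (fun q _ => hfiber q)
      _ = Fintype.card (Quot r) * p ^ d := by simp [Finset.sum_const, mul_comm]
  have hpow : p ^ (d ^ 2 - d) * p ^ d = p ^ (d * d) := by
    rw [← pow_add, Nat.sub_add_cancel (by nlinarith : d ≤ d ^ 2), sq]
  have key : p ^ (d ^ 2 - d) * p ^ d ≤ Nat.card (Quot r) * p ^ d := by
    rw [hpow, Nat.card_eq_fintype_card]
    exact hle
  exact Nat.le_of_mul_le_mul_right key (pow_pos (Fact.out (p := p.Prime)).pos d)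
end
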